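/- arXiv:2308.16457 — 4 statements merged into one kernel-verified Lean document; each statement's English description precedes it below -/
import Mathlib

section
/- Let n ≥ 2, let π ∈ ℒⁿ, and let i ∈ {1,…,n−2}. Then the permutation sⁱ(π) (the i-th iterate of stack-sorting applied to π) ends exactly with the sequence (n−i), 1, (n−i+1), (n−i+2), …, (n−1), n occupying its last i+2 positions. -/
open scoped Pointwise

/-- One pass of the stack-sorting algorithm: `ssAux stack input`, where
`stack` holds the current stack contents, top first.  If the next input
entry exceeds the top of the stack, the top is popped to the output;
otherwise the entry is pushed; at the end the stack is popped entirely. -/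
def ssAux : List ℕ → List ℕ → List ℕ
  | stack, [] => stack
  | [], x :: xs => ssAux [x] xs
  | t :: ts, x :: xs =>
    if t < x then t :: ssAux ts (x :: xs) else ssAux (x :: t :: ts) xs
termination_by stack inp => stack.length + 2 * inp.length

/-- The stack-sorting map `s`: one pass of the stack-sorting algorithm. -/
def stackSort (l : List ℕ) : List ℕ := ssAux [] l

lemma ssAux_nil (s : List ℕ) : ssAux s [] = s := by rw [ssAux]
lemma ssAux_nil_cons (x : ℕ) (xs : List ℕ) : ssAux [] (x::xs) = ssAux [x] xs := by rw [ssAux]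
lemma ssAux_cons_cons (t : ℕ) (ts : List ℕ) (x : ℕ) (xs : List ℕ) :
    ssAux (t::ts) (x::xs) = if t < x then t :: ssAux ts (x::xs) else ssAux (x::t::ts) xs := by
  rw [ssAux]

theorem ssAux_flush (x : ℕ) : ∀ (stack rest : List ℕ),
    (∀ a ∈ stack, a < x) → ssAux stack (x :: rest) = stack ++ ssAux [x] rest
  | [], rest, _ => by rw [ssAux_nil_cons]; rfl
  | t :: ts, rest, hs => by
      rw [ssAux_cons_cons, if_pos (hs t (by simp)), ssAux_flush x ts rest (fun a ha => hs a (by simp [ha]))]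
      rfl

theorem ssAux_split (x : ℕ) : ∀ (stack input rest : List ℕ),
    (∀ a ∈ stack, a < x) → (∀ a ∈ input, a < x) →
    ssAux stack (input ++ x :: rest) = ssAux stack input ++ ssAux [x] rest
  | stack, [], rest, hs, _ => by
      rw [List.nil_append, ssAux_flush x stack rest hs, ssAux_nil]
  | [], y :: ys, rest, hs, hi => by
      rw [List.cons_append, ssAux_nil_cons, ssAux_nil_cons]
      exact ssAux_split x [y] ys rest (by simpa using hi y (by simp)) (fun a ha => hi a (by simp [ha]))
  | t :: ts, y :: ys, rest, hs, hi => by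
      rw [List.cons_append, ssAux_cons_cons, ssAux_cons_cons]
      by_cases h : t < y
      · rw [if_pos h, if_pos h, show y :: (ys ++ x :: rest) = (y :: ys) ++ x :: rest from rfl,
          ssAux_split x ts (y :: ys) rest (fun a ha => hs a (by simp [ha])) hi, List.cons_append]
      · rw [if_neg h, if_neg h]
        exact ssAux_split x (y :: t :: ts) ys rest
          (by intro a ha; rcases List.mem_cons.mp ha with h1 | h1
              · exact h1 ▸ hi y (by simp)
              · exact hs a h1)
          (fun a ha => hi a (by simp [ha]))
termination_by stack input rest => stack.length + 2 * input.length
decreasing_by all_goals (simp <;> omega)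

theorem ssAux_bottom (x : ℕ) : ∀ (stack rest : List ℕ),
    (∀ a ∈ stack, a < x) → (∀ a ∈ rest, a < x) →
    ssAux (stack ++ [x]) rest = ssAux stack rest ++ [x]
  | stack, [], _, _ => by rw [ssAux_nil, ssAux_nil]
  | [], y :: ys, hs, hi => by
      rw [List.nil_append, ssAux_cons_cons, if_neg (by have := hi y (by simp); omega),
        ssAux_nil_cons]
      exact ssAux_bottom x [y] ys (by simpa using hi y (by simp)) (fun a ha => hi a (by simp [ha]))
  | t :: ts, y :: ys, hs, hi => by
      rw [List.cons_append, ssAux_cons_cons, ssAux_cons_cons]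
      by_cases h : t < y
      · rw [if_pos h, if_pos h,
          ssAux_bottom x ts (y :: ys) (fun a ha => hs a (by simp [ha])) hi, List.cons_append]
      · rw [if_neg h, if_neg h, ← List.cons_append, ← List.cons_append]
        exact ssAux_bottom x (y :: t :: ts) ys
          (by intro a ha; rcases List.mem_cons.mp ha with h1 | h1
              · exact h1 ▸ hi y (by simp)
              · exact hs a h1)
          (fun a ha => hi a (by simp [ha]))
termination_by stack rest => stack.length + 2 * rest.length
decreasing_by all_goals (simp <;> omega)

theorem ssAux_perm : ∀ (stack input : List ℕ), (ssAux stack input).Perm (stack ++ input)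
  | stack, [] => by rw [ssAux_nil]; simp
  | [], y :: ys => by
      rw [ssAux_nil_cons]; simpa using ssAux_perm [y] ys
  | t :: ts, y :: ys => by
      rw [ssAux_cons_cons]
      by_cases h : t < y
      · rw [if_pos h]
        exact ((ssAux_perm ts (y :: ys)).cons t)
      · rw [if_neg h]
        exact (ssAux_perm (y :: t :: ts) ys).trans List.perm_middle.symm
termination_by stack input => stack.length + 2 * input.length
decreasing_by all_goals (simp <;> omega)

theorem ssAux_run : ∀ (i k : ℕ), ssAux [k] (List.range' (k+1) i) = List.range' k (i+1)
  | 0, k => by simp [ssAux_nil]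
  | i+1, k => by
      rw [List.range'_succ, ssAux_cons_cons, if_pos (Nat.lt_succ_self k), ssAux_nil_cons,
        ssAux_run i (k+1)]
      simp [List.range'_succ]

theorem stackSort_perm (l : List ℕ) : (stackSort l).Perm l := by
  simpa [stackSort] using ssAux_perm [] l

theorem stackSort_max (j : ℕ) (l : List ℕ) (hl : l.Perm (List.range' 2 (j+1))) :
    ∃ M : List ℕ, M.Perm (List.range' 2 j) ∧ stackSort l = M ++ [j+2] := by
  have hmem : j + 2 ∈ l := hl.mem_iff.mpr (by simp [List.mem_range'_1]; omega)
  obtain ⟨A, B, rfl⟩ := List.append_of_mem hmem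
  have hAB : (A ++ B).Perm (List.range' 2 j) := by
    have h1 : (A ++ (j+2) :: B).Perm ((j+2) :: (A ++ B)) := List.perm_middle
    have h2 : (List.range' 2 (j+1)).Perm ((j+2) :: List.range' 2 j) := by
      rw [List.range'_concat]
      simpa [Nat.add_comm] using (List.perm_middle (a := 2 + j) (l₁ := List.range' 2 j) (l₂ := []))
    exact (List.perm_cons (j+2)).mp (h1.symm.trans (hl.trans h2))
  have hlt : ∀ a ∈ A ++ B, a < j + 2 := by
    intro a ha
    have := hAB.mem_iff.mp ha
    rw [List.mem_range'_1] at this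
    omega
  have hA : ∀ a ∈ A, a < j + 2 := fun a ha => hlt a (by simp [ha])
  have hB : ∀ a ∈ B, a < j + 2 := fun a ha => hlt a (by simp [ha])
  refine ⟨ssAux [] A ++ ssAux [] B, ?_, ?_⟩
  · exact (((ssAux_perm [] A).append (ssAux_perm [] B)).trans (by simp)).trans hAB
  · rw [stackSort, ssAux_split (j+2) [] A B (by simp) hA,
      show [j+2] = [] ++ [j+2] from rfl, ssAux_bottom (j+2) [] B (by simp) hB,
      List.append_assoc]
    simp

theorem stackSort_step (k i : ℕ) (hk : 1 < k) (M : List ℕ) (hM : ∀ a ∈ M, a < k) :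
    stackSort (M ++ [k, 1] ++ List.range' (k+1) i) =
      stackSort M ++ [1] ++ List.range' k (i+1) := by
  have h1 : M ++ [k, 1] ++ List.range' (k+1) i = M ++ k :: (1 :: List.range' (k+1) i) := by
    simp
  rw [h1, stackSort, ssAux_split k [] M (1 :: List.range' (k+1) i) (by simp) hM]
  have h2 : ssAux [k] (1 :: List.range' (k+1) i) = 1 :: List.range' k (i+1) := by
    rw [ssAux_cons_cons, if_neg (show ¬ (k < 1) by omega)]
    cases i with
    | zero => simp [ssAux_nil, List.range'_succ]
    | succ i' =>
        rw [List.range'_succ (s := k+1), ssAux_cons_cons, if_pos (show (1:ℕ) < k + 1 by omega),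
          ← List.range'_succ (s := k+1), ssAux_run]
  rw [h2, stackSort, List.append_assoc]
  rfl

/-- Let `n ≥ 2`, let `π = L ++ [n, 1] ∈ ℒⁿ` where `L` is a
permutation of `{2, …, n-1}`, and let `1 ≤ i ≤ n-2`.  Then the `i`-th
stack-sorting iterate `sⁱ(π)` ends exactly with the sequence
`(n-i), 1, (n-i+1), (n-i+2), …, (n-1), n` occupying its last `i+2`
positions. -/
theorem stackSort_iterate_Ln1_suffix (n : ℕ) (hn : 2 ≤ n) (L : List ℕ)
    (hL : L.Perm (List.range' 2 (n - 2))) (i : ℕ) (hi1 : 1 ≤ i)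
    (hi2 : i ≤ n - 2) :
    ∃ M : List ℕ, M.length = n - (i + 2) ∧
      stackSort^[i] (L ++ [n, 1]) =
        M ++ [n - i, 1] ++ List.range' (n - i + 1) i := by
  have key : ∀ i, 1 ≤ i → i ≤ n - 2 →
      ∃ M : List ℕ, M.Perm (List.range' 2 (n - 2 - i)) ∧
        stackSort^[i] (L ++ [n, 1]) = M ++ [n - i, 1] ++ List.range' (n - i + 1) i := by
    intro i
    induction i with
    | zero => intro h; exact absurd h (by simp)
    | succ i ih =>
      intro _ hle
      by_cases hi0 : i = 0
      · subst hi0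
        have hn3 : 3 ≤ n := by omega
        rw [Function.iterate_one]
        have hLlt : ∀ a ∈ L, a < n := by
          intro a ha
          have := hL.mem_iff.mp ha
          rw [List.mem_range'_1] at this
          omega
        have h0 : L ++ [n, 1] = L ++ [n, 1] ++ List.range' (n + 1) 0 := by simp
        rw [h0, stackSort_step n 0 (by omega) L hLlt]
        obtain ⟨M, hMp, hMe⟩ := stackSort_max (n - 3) L
          (by rw [show n - 3 + 1 = n - 2 by omega]; exact hL)
        refine ⟨M, by rw [show n - 2 - 1 = n - 3 by omega]; exact hMp, ?_⟩
        rw [hMe]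
        rw [show n - 3 + 2 = n - 1 by omega, show n - 1 + 1 = n by omega]
        simp
      · have hi : 1 ≤ i := by omega
        obtain ⟨M, hMp, hMe⟩ := ih hi (by omega)
        rw [Function.iterate_succ_apply', hMe]
        have hMlt : ∀ a ∈ M, a < n - i := by
          intro a ha
          have := hMp.mem_iff.mp ha
          rw [List.mem_range'_1] at this
          omega
        rw [stackSort_step (n - i) i (by omega) M hMlt]
        obtain ⟨M', hM'p, hM'e⟩ := stackSort_max (n - 2 - (i + 1)) M
          (by rw [show n - 2 - (i + 1) + 1 = n - 2 - i by omega]; exact hMp)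
        refine ⟨M', hM'p, ?_⟩
        rw [hM'e, show n - 2 - (i + 1) + 2 = n - (i + 1) by omega,
          show n - (i + 1) + 1 = n - i by omega]
        simp
  obtain ⟨M, hMp, hMe⟩ := key i hi1 hi2
  exact ⟨M, by rw [hMp.length_eq, List.length_range']; omega, hMe⟩
end

section
/- Let n ≥ 2, let τₙ denote the permutation 2 3 ⋯ (n−1) n 1 of {1,…,n}, and let i ∈ {1,…,n−1}. Then sⁱ(τₙ) = 2 3 ⋯ (n−i) 1 (n−i+1) (n−i+2) ⋯ (n−1) n; that is, the i-th stack-sorting iterate of τₙ begins with 2,3,…,(n−i), followed by 1, followed by (n−i+1),…,n in increasing order. -/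
open scoped Pointwise

/-! An increasing run of input passes through a one-element stack unchanged; a small entry
below the top of the stack is pushed and then popped as soon as anything larger arrives.
Hence one pass of `s` on `2 ⋯ (k+2) 1 (k+3) ⋯` moves `1` one place to the left, and
induction on `i` gives the theorem. -/

theorem ssAux_cons_of_forall_head?_lt {t : ℕ} {st l : List ℕ} (h : ∀ x ∈ l.head?, t < x) :
    ssAux (t :: st) l = t :: ssAux st l := by
  cases l with
  | nil => simp [ssAux]
  | cons x xs => simp [ssAux, h x rfl]

theorem ssAux_singleton_range'_append (a k : ℕ) (rest : List ℕ) :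
    ssAux [a] (List.range' (a + 1) k ++ rest) = List.range' a k ++ ssAux [a + k] rest := by
  induction k generalizing a with
  | zero => simp
  | succ k ih =>
    rw [List.range'_succ, List.cons_append, ssAux, if_pos (Nat.lt_succ_self a), ssAux, ih,
      List.range'_succ]
    simp [Nat.add_assoc, Nat.add_comm 1 k]

theorem ssAux_singleton_range' (a k : ℕ) :
    ssAux [a] (List.range' (a + 1) k) = List.range' a (k + 1) := by
  simpa [ssAux, List.range'_concat] using ssAux_singleton_range'_append a k []

theorem stackSort_range'_one_range' (k m : ℕ) :
    stackSort (List.range' 2 (k + 1) ++ [1] ++ List.range' (k + 3) m) =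
      List.range' 2 k ++ [1] ++ List.range' (k + 2) (m + 1) := by
  have hpop :
      ssAux [1, k + 2] (List.range' (k + 3) m) = 1 :: ssAux [k + 2] (List.range' (k + 3) m) :=
    ssAux_cons_of_forall_head?_lt fun x hx => by
      cases m <;> simp_all [List.range'_succ]; omega
  calc stackSort (List.range' 2 (k + 1) ++ [1] ++ List.range' (k + 3) m)
      = ssAux [2] (List.range' 3 k ++ 1 :: List.range' (k + 3) m) := by
        simp [stackSort, List.range'_succ, ssAux]
    _ = List.range' 2 k ++ ssAux [1, k + 2] (List.range' (k + 3) m) := by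
        rw [ssAux_singleton_range'_append 2 k, ssAux, if_neg (by omega), Nat.add_comm 2 k]
    _ = List.range' 2 k ++ [1] ++ List.range' (k + 2) (m + 1) := by
        rw [hpop, ssAux_singleton_range']; simp

theorem stackSort_iterate_range'_one (i j : ℕ) :
    stackSort^[i] (List.range' 2 (j + i) ++ [1]) =
      List.range' 2 j ++ [1] ++ List.range' (j + 2) i := by
  induction i generalizing j with
  | zero => simp
  | succ i ih =>
    rw [Function.iterate_succ_apply', ← Nat.add_assoc, Nat.add_right_comm, ih (j + 1),
      stackSort_range'_one_range']

theorem stackSort_iterate_tau_general (n : ℕ) (i : ℕ)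
    (hi2 : i ≤ n - 1) :
    stackSort^[i] (List.range' 2 (n - 1) ++ [1]) =
      List.range' 2 (n - i - 1) ++ [1] ++ List.range' (n - i + 1) i := by
  rcases Nat.eq_zero_or_pos n with rfl | hn
  · simp_all
  rw [show n - 1 = (n - i - 1) + i by omega, stackSort_iterate_range'_one,
    show n - i - 1 + 2 = n - i + 1 by omega]

/-- Let `n ≥ 2`, let `τₙ = 2 3 ⋯ (n-1) n 1`, and let
`1 ≤ i ≤ n-1`.  Then
`sⁱ(τₙ) = 2 3 ⋯ (n-i) 1 (n-i+1) (n-i+2) ⋯ (n-1) n`. -/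
theorem stackSort_iterate_tau (n : ℕ) (hn : 2 ≤ n) (i : ℕ) (hi1 : 1 ≤ i)
    (hi2 : i ≤ n - 1) :
    stackSort^[i] (List.range' 2 (n - 1) ++ [1]) =
      List.range' 2 (n - i - 1) ++ [1] ++ List.range' (n - i + 1) i :=
  stackSort_iterate_tau_general n i hi2
end

section
/- Let n ≥ 2, let τₙ = 2 3 ⋯ (n−1) n 1, let 𝒮^{τₙ} be the set of its stack-sorting iterates regarded as points of ℝⁿ, let e = (1,2,…,n), and let △ₙ = conv(𝒮^{τₙ}). Then every point of △ₙ with integer coordinates that is not a vertex of △ₙ lies on the facet conv(𝒮^{τₙ} \ {e}); in particular, △ₙ has no integer points in its relative interior (△ₙ is hollow). -/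
open scoped Pointwise

/-- A list of naturals, viewed as a point of `ℝⁿ` (entry `i` is the `i`-th
element of the list). -/
def toPoint (n : ℕ) (l : List ℕ) : Fin n → ℝ := fun i => (l.getD i 0 : ℝ)

/-- The permutation `τₙ = 2 3 ⋯ (n-1) n 1`, as a list. -/
def tauList (n : ℕ) : List ℕ := List.range' 2 (n - 1) ++ [1]

/-- The point of `ℝⁿ` corresponding to `τₙ = 2 3 ⋯ (n-1) n 1`. -/
noncomputable def tauPt (n : ℕ) : Fin n → ℝ := toPoint n (tauList n)

/-- The set `𝒮^{τₙ} = {s⁰(τₙ), s¹(τₙ), …, s^{n-1}(τₙ)} ⊆ ℝⁿ` of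
stack-sorting iterates of `τₙ`, regarded as points of `ℝⁿ`. -/
noncomputable def ssIterates (n : ℕ) : Set (Fin n → ℝ) :=
  Set.range fun i : Fin n => toPoint n (stackSort^[(i : ℕ)] (tauList n))

/-- The simplex `△ₙ`: the convex hull of the stack-sorting iterates of
`τₙ = 2 3 ⋯ (n-1) n 1`. -/
noncomputable def ssSimplex (n : ℕ) : Set (Fin n → ℝ) :=
  convexHull ℝ (ssIterates n)

/-- `x ∈ ℝⁿ` is a lattice (integer) point if all its coordinates are integers. -/
def IsLatticePt {n : ℕ} (x : Fin n → ℝ) : Prop := ∀ i, ∃ z : ℤ, x i = (z : ℝ)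

/-- The number of lattice points of a subset of `ℝⁿ`. -/
noncomputable def lattCount {n : ℕ} (S : Set (Fin n → ℝ)) : ℕ :=
  Set.ncard {x ∈ S | IsLatticePt x}

lemma ssAux_single_run : ∀ (k c : ℕ), ssAux [c] (List.range' (c+1) k) = List.range' c (k+1)
  | 0, c => by
    simp only [List.range'_zero, List.range'_succ, List.range'_zero]
    rw [ssAux]
  | k+1, c => by
    simp only [List.range'_succ]
    rw [ssAux, if_pos (Nat.lt_succ_self c), ssAux, ← List.range'_succ,
      ssAux_single_run k (c+1)]

lemma ssAux_pair_run : ∀ (k c : ℕ), 1 ≤ c →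
    ssAux [1, c] (List.range' (c+1) k) = 1 :: List.range' c (k+1)
  | 0, c, _ => by
    simp only [List.range'_zero, List.range'_succ, List.range'_zero]
    rw [ssAux]
  | k+1, c, hc => by
    simp only [List.range'_succ]
    rw [ssAux, if_pos (by omega : 1 < c + 1), ← List.range'_succ, ssAux_single_run (k+1) c]
    simp [List.range'_succ]

lemma ssAux_main_run : ∀ (m b : ℕ) (rest : List ℕ), 1 ≤ b →
    ssAux [b] (List.range' (b+1) m ++ 1 :: rest) = List.range' b m ++ ssAux [1, b + m] rest
  | 0, b, rest, hb => by
    simp only [List.range'_zero, List.nil_append, Nat.add_zero]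
    rw [ssAux, if_neg (by omega)]
  | m+1, b, rest, hb => by
    simp only [List.range'_succ, List.cons_append]
    rw [ssAux, if_pos (Nat.lt_succ_self b), ssAux,
      ssAux_main_run m (b+1) rest (by omega)]
    have : b + 1 + m = b + (m + 1) := by omega
    rw [this]

lemma stackSort_step_s8 (m k : ℕ) :
    stackSort (List.range' 2 (m+1) ++ 1 :: List.range' (m+3) k)
      = List.range' 2 m ++ 1 :: List.range' (m+2) (k+1) := by
  unfold stackSort
  rw [List.range'_succ, List.cons_append, ssAux, ssAux_main_run m 2 _ (by omega)]
  have h2 : 2 + m = m + 2 := by omega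
  rw [h2, show m + 3 = (m + 2) + 1 from rfl, ssAux_pair_run (k) (m+2) (by omega)]


lemma iterate_eq (n : ℕ) (hn : 1 ≤ n) :
    ∀ i, i ≤ n - 1 → stackSort^[i] (tauList n)
      = List.range' 2 (n-1-i) ++ 1 :: List.range' (n-1-i+2) i
  | 0, _ => by simp [tauList]
  | i+1, h => by
    rw [Function.iterate_succ_apply', iterate_eq n hn i (by omega)]
    obtain ⟨m, hm⟩ : ∃ m, n - 1 - i = m + 1 := ⟨n - 2 - i, by omega⟩
    rw [hm, show m + 1 + 2 = m + 3 from rfl, stackSort_step_s8 m i,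
      show n - 1 - (i+1) = m by omega]

/-- Face extraction: if `f ≤ c` on `s` and `f x = c` for `x` in hull, then `x`
is in the hull of the subset where `f = c`. -/
lemma mem_convexHull_face {E : Type*} [AddCommGroup E] [Module ℝ E]
    (f : E →ₗ[ℝ] ℝ) {s : Set E} {c : ℝ} (hs : ∀ y ∈ s, f y ≤ c)
    {x : E} (hx : x ∈ convexHull ℝ s) (hfx : f x = c) :
    x ∈ convexHull ℝ {y | y ∈ s ∧ f y = c} := by
  rw [convexHull_eq] at hx
  obtain ⟨ι, t, w, z, hw0, hw1, hz, hcm⟩ := hx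
  have hxeq : x = ∑ i ∈ t, w i • z i := by
    rw [← hcm, Finset.centerMass_eq_of_sum_1 _ _ hw1]
  have hfsum : ∑ i ∈ t, w i * f (z i) = c := by
    have : f x = ∑ i ∈ t, w i * f (z i) := by
      rw [hxeq, map_sum]; simp [smul_eq_mul]
    rw [← this, hfx]
  have hzero : ∀ i ∈ t, w i * (c - f (z i)) = 0 := by
    rw [← Finset.sum_eq_zero_iff_of_nonneg
      (fun i hi => mul_nonneg (hw0 i hi) (by linarith [hs (z i) (hz i hi)]))]
    have : ∑ i ∈ t, w i * (c - f (z i)) = (∑ i ∈ t, w i) * c - ∑ i ∈ t, w i * f (z i) := by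
      rw [Finset.sum_mul, ← Finset.sum_sub_distrib]; exact Finset.sum_congr rfl (fun i _ => by ring)
    rw [this, hw1, hfsum]; ring
  rw [← hcm, ← Finset.centerMass_filter_ne_zero]
  refine Finset.centerMass_mem_convexHull _ (fun i hi => hw0 i (Finset.mem_filter.1 hi).1) ?_ ?_
  · rw [Finset.sum_filter_ne_zero, hw1]; norm_num
  · intro i hi
    obtain ⟨hit, hwi⟩ := Finset.mem_filter.1 hi
    refine ⟨hz i hit, ?_⟩
    have := hzero i hit
    rcases mul_eq_zero.1 this with h | h
    · exact absurd h hwi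
    · linarith

/-- From a point in the intrinsic interior one can move past it along the line
from any point of the set, staying in the set. -/
lemma exists_one_lt_lineMap_mem {n : ℕ} {s : Set (Fin n → ℝ)} {x a : Fin n → ℝ}
    (hx : x ∈ intrinsicInterior ℝ s) (ha : a ∈ s) :
    ∃ t : ℝ, 1 < t ∧ AffineMap.lineMap a x t ∈ s := by
  obtain ⟨y, hy, rfl⟩ := hx
  have ha' : a ∈ affineSpan ℝ s := subset_affineSpan ℝ s ha
  set γ : ℝ → affineSpan ℝ s :=
    fun t => ⟨AffineMap.lineMap a (y : Fin n → ℝ) t, AffineMap.lineMap_mem t ha' y.2⟩ with hγ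
  have hcont : Continuous γ :=
    Continuous.subtype_mk (AffineMap.lineMap_continuous) _
  have hopen : IsOpen (γ ⁻¹' interior ((↑) ⁻¹' s)) := isOpen_interior.preimage hcont
  have h1 : (1:ℝ) ∈ γ ⁻¹' interior ((↑) ⁻¹' s) := by
    have : γ 1 = y := by
      apply Subtype.ext; simp [hγ]
    simpa [Set.mem_preimage, this] using hy
  rw [Metric.isOpen_iff] at hopen
  obtain ⟨ε, hε, hball⟩ := hopen 1 h1
  refine ⟨1 + ε/2, by linarith, ?_⟩
  have hmem : (1 + ε/2 : ℝ) ∈ Metric.ball (1:ℝ) ε := by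
    simp only [Metric.mem_ball, Real.dist_eq]
    rw [abs_of_nonneg (by linarith)]
    linarith
  have := interior_subset (hball hmem)
  exact this


/-- Let `n ≥ 2`, `τₙ = 2 3 ⋯ (n-1) n 1`,
`𝒮^{τₙ}` its set of stack-sorting iterates (as points of `ℝⁿ`),
`e = (1, 2, …, n)` and `△ₙ = conv(𝒮^{τₙ})`.  Every integer point of `△ₙ`
that is not a vertex (i.e. not a point of `𝒮^{τₙ}`) lies on the facet
`conv(𝒮^{τₙ} \ {e})`; in particular `△ₙ` has no integer point in its
relative interior, i.e. `△ₙ` is hollow. -/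
theorem ssSimplex_hollow (n : ℕ) (hn : 2 ≤ n) :
    (∀ x ∈ ssSimplex n, IsLatticePt x → x ∉ ssIterates n →
      x ∈ convexHull ℝ (ssIterates n \ {toPoint n (List.range' 1 n)})) ∧
    (∀ x ∈ intrinsicInterior ℝ (ssSimplex n), ¬ IsLatticePt x) := by
  set i0 : Fin n := ⟨0, by omega⟩ with hi0
  set f : (Fin n → ℝ) →ₗ[ℝ] ℝ := LinearMap.proj i0 with hf
  have hfapp : ∀ v : Fin n → ℝ, f v = v i0 := fun v => rfl
  set ePt : Fin n → ℝ := toPoint n (List.range' 1 n) with hePt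
  have hrange1 : List.range' 1 n = 1 :: List.range' 2 (n-1) := by
    conv_lhs => rw [show n = (n-1)+1 by omega]
    rw [List.range'_succ]
  have hePt0 : ePt i0 = 1 := by
    rw [hePt, toPoint, hrange1]
    simp [hi0]
  -- every vertex has first coordinate 2, or is ePt
  have key1 : ∀ v ∈ ssIterates n, v i0 = 2 ∨ v = ePt := by
    rintro v ⟨i, rfl⟩
    show toPoint n (stackSort^[(i:ℕ)] (tauList n)) i0 = 2 ∨
      toPoint n (stackSort^[(i:ℕ)] (tauList n)) = ePt
    rw [iterate_eq n (by omega) i.1 (by omega : i.1 ≤ n - 1)]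
    rcases Nat.eq_zero_or_pos (n - 1 - i.1) with h | h
    · right
      have hi : i.1 = n - 1 := by have := i.2; omega
      rw [h, hi, hePt, hrange1]
      simp
    · left
      obtain ⟨m, hm⟩ : ∃ m, n - 1 - i.1 = m + 1 := ⟨n - 1 - i.1 - 1, by omega⟩
      rw [hm, toPoint, List.range'_succ]
      simp [hi0]
  have hePt_mem : ePt ∈ ssIterates n := by
    have he : toPoint n (stackSort^[n-1] (tauList n)) = ePt := by
      rw [iterate_eq n (by omega) (n-1) le_rfl]
      simp only [Nat.sub_self]
      rw [hePt, hrange1]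
      simp
    exact ⟨⟨n-1, by omega⟩, by simpa using he⟩
  set aPt : Fin n → ℝ := toPoint n (tauList n) with haPt
  have haPt_mem : aPt ∈ ssIterates n := ⟨⟨0, by omega⟩, by simp [haPt]⟩
  have haPt0 : aPt i0 = 2 := by
    rw [haPt, toPoint, tauList, show n - 1 = (n-2)+1 by omega, List.range'_succ]
    simp [hi0]
  -- bound on the hull
  have hvbound : ∀ v ∈ ssIterates n, 1 ≤ f v ∧ f v ≤ 2 := by
    intro v hv
    rcases key1 v hv with h | h
    · rw [hfapp, h]; norm_num
    · rw [hfapp, h, hePt0]; norm_num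
  have hbound : ∀ x ∈ ssSimplex n, 1 ≤ f x ∧ f x ≤ 2 := by
    intro x hx
    have : ssSimplex n ⊆ {y | 1 ≤ f y} ∩ {y | f y ≤ 2} := by
      apply convexHull_min
      · intro v hv; exact ⟨(hvbound v hv).1, (hvbound v hv).2⟩
      · exact (convex_halfSpace_ge f.isLinear 1).inter (convex_halfSpace_le f.isLinear 2)
    exact this hx
  have hval : ∀ x ∈ ssSimplex n, IsLatticePt x → x i0 = 1 ∨ x i0 = 2 := by
    intro x hx hlat
    obtain ⟨z, hz⟩ := hlat i0
    have hb := hbound x hx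
    rw [hfapp] at hb
    rw [hz] at hb ⊢
    have h1 : (1:ℤ) ≤ z := by exact_mod_cast hb.1
    have h2 : z ≤ (2:ℤ) := by exact_mod_cast hb.2
    interval_cases z
    · left; norm_num
    · right; norm_num
  constructor
  · intro x hx hlat hnv
    rcases hval x hx hlat with h1 | h2
    · -- x has first coordinate 1, so x = ePt, contradiction
      exfalso
      have hface : x ∈ convexHull ℝ {y | y ∈ ssIterates n ∧ (-f) y = -1} := by
        apply mem_convexHull_face (-f) (fun y hy => ?_) hx (by simp [hfapp, h1])
        simp only [LinearMap.neg_apply, neg_le_neg_iff]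
        exact (hvbound y hy).1
      have hsub : {y | y ∈ ssIterates n ∧ (-f) y = -1} ⊆ {ePt} := by
        rintro y ⟨hy, hy1⟩
        simp only [LinearMap.neg_apply, neg_inj] at hy1
        rcases key1 y hy with h | h
        · rw [hfapp, h] at hy1; norm_num at hy1
        · exact h
      have := convexHull_mono hsub hface
      rw [convexHull_singleton] at this
      rw [Set.mem_singleton_iff] at this
      exact hnv (this ▸ hePt_mem)
    · have hface : x ∈ convexHull ℝ {y | y ∈ ssIterates n ∧ f y = 2} := by
        apply mem_convexHull_face f (fun y hy => (hvbound y hy).2) hx (by rw [hfapp, h2])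
      refine convexHull_mono ?_ hface
      rintro y ⟨hy, hy2⟩
      refine ⟨hy, ?_⟩
      simp only [Set.mem_singleton_iff]
      intro hc
      rw [hfapp, hc, hePt0] at hy2
      norm_num at hy2
  · intro x hxint hlat
    have hx : x ∈ ssSimplex n := intrinsicInterior_subset hxint
    rcases hval x hx hlat with h1 | h2
    · -- min attained in relative interior: escape past x from aPt
      obtain ⟨t, ht, hmem⟩ := exists_one_lt_lineMap_mem hxint
        (subset_convexHull ℝ _ haPt_mem)
      have hb := (hbound _ hmem).1
      rw [hfapp] at hb
      have : (AffineMap.lineMap aPt x t) i0 = t * (x i0 - aPt i0) + aPt i0 := by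
        rw [AffineMap.lineMap_apply_module]
        simp only [Pi.add_apply, Pi.smul_apply, Pi.sub_apply, smul_eq_mul]
        ring
      rw [this, h1, haPt0] at hb
      linarith
    · obtain ⟨t, ht, hmem⟩ := exists_one_lt_lineMap_mem hxint
        (subset_convexHull ℝ _ hePt_mem)
      have hb := (hbound _ hmem).2
      rw [hfapp] at hb
      have : (AffineMap.lineMap ePt x t) i0 = t * (x i0 - ePt i0) + ePt i0 := by
        rw [AffineMap.lineMap_apply_module]
        simp only [Pi.add_apply, Pi.smul_apply, Pi.sub_apply, smul_eq_mul]
        ring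
      rw [this, h2, hePt0] at hb
      linarith
end

section
/- Let n ≥ 1, let Vₙ be the vertex set of the n-dimensional lecture-hall simplex Pₙ, and let Q_{n+1} = conv(V_{n+1} \ {0_{n+1}}) where 0_{n+1} is the origin of ℝ^{n+1}. Then for every nonnegative integer t, |tPₙ ∩ ℤⁿ| = |tQ_{n+1} ∩ ℤ^{n+1}|; equivalently, Pₙ and Q_{n+1} are integrally equivalent. -/
open scoped Pointwise

/-- The `n`-dimensional lecture-hall simplex
`Pₙ = {x ∈ ℝⁿ : 0 ≤ x₁ ≤ x₂/2 ≤ ⋯ ≤ xₙ/n ≤ 1}` (coordinates `1`-indexed). -/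
def lectureHall (n : ℕ) : Set (Fin n → ℝ) :=
  {x | (∀ i : Fin n, (i : ℕ) = 0 → 0 ≤ x i) ∧
    (∀ i j : Fin n, (j : ℕ) = (i : ℕ) + 1 →
      x i / ((i : ℕ) + 1) ≤ x j / ((j : ℕ) + 1)) ∧
    (∀ i : Fin n, (i : ℕ) = n - 1 → x i / (n : ℝ) ≤ 1)}

/-- The `k`-th vertex (for `0 ≤ k ≤ n`) of the `n`-dimensional lecture-hall
simplex: its last `k` coordinates agree with `(1, 2, …, n)` and the rest
are `0`. -/
def lhVertex (n k : ℕ) : Fin n → ℝ := fun i =>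
  if (i : ℕ) < n - k then 0 else (i : ℕ) + 1

/-!
The nonzero vertices of `P_{n+1}` are the vertices of `Pₙ` with the coordinate `n + 1`
appended, so `Q_{n+1}` is the image of `Pₙ` under the affine embedding `x ↦ (x, n + 1)`, and
`t • Q_{n+1}` that of `t • Pₙ` under `x ↦ (x, t (n + 1))`. The last coordinate being an integer,
this embedding bijects the integer points.

That `Pₙ` is the convex hull of its listed vertices `vₖ` is seen in the coordinates
`yⱼ = xⱼ / j`: `x = ∑ₘ (y_{m+1} - yₘ) • v_{n-m}`, a convex combination because `y` increases
from `y₀ = 0` to `y_{n+1} = 1`.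
-/

open Finset

lemma convex_lectureHall (n : ℕ) : Convex ℝ (lectureHall n) := by
  rintro x ⟨hx₀, hx, hxn⟩ y ⟨hy₀, hy, hyn⟩ a b ha hb hab
  refine ⟨fun i hi => ?_, fun i j hij => ?_, fun i hi => ?_⟩
  · exact add_nonneg (mul_nonneg ha (hx₀ i hi)) (mul_nonneg hb (hy₀ i hi))
  · have := hx i j hij
    have := hy i j hij
    simp only [Pi.add_apply, Pi.smul_apply, smul_eq_mul, add_div, mul_div_assoc]
    gcongr
  · have := hxn i hi
    have := hyn i hi
    simp only [Pi.add_apply, Pi.smul_apply, smul_eq_mul, add_div, mul_div_assoc]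
    calc a * (x i / n) + b * (y i / n) ≤ a * 1 + b * 1 := by gcongr
      _ = 1 := by rw [mul_one, mul_one, hab]

lemma lhVertex_mem_lectureHall (n k : ℕ) : lhVertex n k ∈ lectureHall n := by
  refine ⟨fun i _ => ?_, fun i j hij => ?_, fun i hi => ?_⟩
  · unfold lhVertex; split_ifs <;> positivity
  · unfold lhVertex
    split_ifs with hi hj hj
    · simp
    · rw [zero_div]; positivity
    · omega
    · rw [div_self (by positivity), div_self (by positivity)]
  · have hin : ((i : ℕ) : ℝ) + 1 ≤ n := by exact_mod_cast (by omega : (i : ℕ) + 1 ≤ n)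
    unfold lhVertex
    split_ifs
    · simp
    · rwa [div_le_one (by linarith)]

/-- The coordinates `yⱼ = xⱼ / j` (`1`-indexed), padded by `y₀ = 0` and `yⱼ = 1` for `j > n`;
in them `Pₙ` becomes the order simplex `0 ≤ y₁ ≤ ⋯ ≤ yₙ ≤ 1`. -/
noncomputable def lhSlope {n : ℕ} (x : Fin n → ℝ) : ℕ → ℝ
  | 0 => 0
  | j + 1 => if h : j < n then x ⟨j, h⟩ / (j + 1) else 1

lemma monotone_lhSlope {n : ℕ} {x : Fin n → ℝ} (hx : x ∈ lectureHall n) : Monotone (lhSlope x) := by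
  obtain ⟨hx₀, hx, hxn⟩ := hx
  refine monotone_nat_of_le_succ fun j => ?_
  rcases j with _ | i
  · simp only [lhSlope]
    split_ifs with h
    · simpa using hx₀ ⟨0, h⟩ rfl
    · exact zero_le_one
  · simp only [lhSlope]
    split_ifs with h h'
    · have := hx ⟨i, h⟩ ⟨i + 1, h'⟩ rfl
      push_cast at this ⊢
      exact this
    · have := hxn ⟨i, h⟩ (by simp; omega)
      rwa [show (n : ℝ) = i + 1 by norm_cast; omega] at this
    · omega
    · exact le_rfl

lemma sum_lhSlope_smul_lhVertex {n : ℕ} (x : Fin n → ℝ) :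
    ∑ m ∈ range (n + 1), (lhSlope x (m + 1) - lhSlope x m) • lhVertex n (n - m) = x := by
  funext i
  have hterm : ∀ m ∈ range (n + 1), ((lhSlope x (m + 1) - lhSlope x m) • lhVertex n (n - m)) i =
      if m < (i : ℕ) + 1 then (lhSlope x (m + 1) - lhSlope x m) * ((i : ℕ) + 1) else 0 := by
    intro m hm
    have : n - (n - m) = m := by have := mem_range.1 hm; omega
    simp only [Pi.smul_apply, smul_eq_mul, lhVertex, this]
    split_ifs <;> first | omega | ring
  have hfilter : {m ∈ range (n + 1) | m < (i : ℕ) + 1} = range ((i : ℕ) + 1) := by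
    ext m
    simp only [mem_filter, mem_range]
    have := i.isLt
    omega
  rw [Finset.sum_apply, sum_congr rfl hterm, ← sum_filter, hfilter, ← sum_mul, sum_range_sub]
  simp only [lhSlope, i.isLt, dite_true, sub_zero]
  exact div_mul_cancel₀ _ (by positivity)

theorem lectureHall_eq_convexHull (n : ℕ) :
    lectureHall n = convexHull ℝ (Set.range fun k : Fin (n + 1) => lhVertex n k) := by
  refine subset_antisymm (fun x hx => ?_) <|
    convexHull_min (Set.range_subset_iff.2 fun k => lhVertex_mem_lectureHall n k)
      (convex_lectureHall n)
  have hmono := monotone_lhSlope hx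
  rw [← sum_lhSlope_smul_lhVertex x]
  refine (convex_convexHull ℝ _).sum_mem (fun m _ => sub_nonneg.2 (hmono m.le_succ)) ?_
    fun m hm => subset_convexHull ℝ _ ⟨⟨n - m, by omega⟩, rfl⟩
  rw [sum_range_sub]
  simp [lhSlope]

def snocAffineMap {R : Type*} [Ring R] (n : ℕ) (c : R) : (Fin n → R) →ᵃ[R] Fin (n + 1) → R where
  toFun x := Fin.snoc x c
  linear :=
    { toFun := fun x => Fin.snoc x 0
      map_add' x y := by funext i; refine Fin.lastCases ?_ (fun j => ?_) i <;> simp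
      map_smul' a x := by funext i; refine Fin.lastCases ?_ (fun j => ?_) i <;> simp }
  map_vadd' x v := by funext i; refine Fin.lastCases ?_ (fun j => ?_) i <;> simp

section snocAffineMap

variable {R : Type*} [Ring R] {n : ℕ}

@[simp] lemma snocAffineMap_apply (c : R) (x : Fin n → R) : snocAffineMap n c x = Fin.snoc x c :=
  rfl

lemma snocAffineMap_injective (c : R) : Function.Injective (snocAffineMap n c) :=
  fun x y h => by simpa using congrArg Fin.init h

lemma smul_image_snocAffineMap (t c : R) (S : Set (Fin n → R)) :
    t • (snocAffineMap n c '' S) = snocAffineMap n (t * c) '' (t • S) := by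
  rw [← Set.image_smul, ← Set.image_smul, Set.image_image, Set.image_image]
  refine Set.image_congr fun x _ => funext fun i => ?_
  refine Fin.lastCases ?_ (fun j => ?_) i <;> simp

end snocAffineMap

def integerPoints {ι : Type*} (S : Set (ι → ℝ)) : Set (ι → ℝ) :=
  {x ∈ S | ∀ i, ∃ z : ℤ, x i = z}

lemma integerPoints_image_snocAffineMap {n : ℕ} (z : ℤ) (S : Set (Fin n → ℝ)) :
    integerPoints (snocAffineMap n (z : ℝ) '' S) = snocAffineMap n (z : ℝ) '' integerPoints S := by
  ext y
  constructor
  · rintro ⟨⟨x, hx, rfl⟩, hint⟩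
    exact ⟨x, ⟨hx, fun i => by simpa using hint i.castSucc⟩, rfl⟩
  · rintro ⟨x, ⟨hx, hint⟩, rfl⟩
    exact ⟨⟨x, hx, rfl⟩, fun i => Fin.lastCases ⟨z, by simp⟩ (fun j => by simpa using hint j) i⟩

lemma lhVertex_zero (n : ℕ) : lhVertex n 0 = 0 := by
  funext i
  simp [lhVertex]

lemma lhVertex_succ (n k : ℕ) :
    lhVertex (n + 1) (k + 1) = snocAffineMap n ((n : ℝ) + 1) (lhVertex n k) := by
  funext i
  refine Fin.lastCases ?_ (fun j => ?_) i
  · simp [lhVertex]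
  · simp [lhVertex, show n + 1 - (k + 1) = n - k by omega]

lemma range_lhVertex_sdiff_zero (n : ℕ) :
    (Set.range fun k : Fin (n + 2) => lhVertex (n + 1) k) \ {0} =
      snocAffineMap n ((n : ℝ) + 1) '' Set.range fun k : Fin (n + 1) => lhVertex n k := by
  rw [← Set.range_comp]
  ext v
  constructor
  · rintro ⟨⟨k, rfl⟩, hk⟩
    induction k using Fin.cases with
    | zero => exact absurd (lhVertex_zero _) hk
    | succ k => exact ⟨k, (lhVertex_succ n k).symm⟩
  · rintro ⟨k, rfl⟩
    refine ⟨⟨k.succ, lhVertex_succ n k⟩, fun h => ?_⟩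
    have := congrFun h (Fin.last n)
    simp only [Function.comp_apply, snocAffineMap_apply, Fin.snoc_last, Pi.zero_apply] at this
    exact Nat.cast_add_one_ne_zero n this

theorem convexHull_range_lhVertex_sdiff_zero (n : ℕ) :
    convexHull ℝ ((Set.range fun k : Fin (n + 2) => lhVertex (n + 1) k) \ {0}) =
      snocAffineMap n ((n : ℝ) + 1) '' lectureHall n := by
  rw [range_lhVertex_sdiff_zero, ← AffineMap.image_convexHull, ← lectureHall_eq_convexHull]

theorem lectureHall_eq_Q_lattice_count_general (n : ℕ) (t : ℕ) :
    Set.ncard {x ∈ (t : ℝ) • lectureHall n | ∀ i, ∃ z : ℤ, x i = (z : ℝ)} =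
    Set.ncard {x ∈ (t : ℝ) • convexHull ℝ
        ((Set.range fun k : Fin (n + 2) => lhVertex (n + 1) (k : ℕ)) \ {0}) |
      ∀ i, ∃ z : ℤ, x i = (z : ℝ)} := by
  change (integerPoints _).ncard = (integerPoints _).ncard
  have hlast : (t : ℝ) * ((n : ℝ) + 1) = ((t * (n + 1) : ℤ) : ℝ) := by push_cast; rfl
  rw [convexHull_range_lhVertex_sdiff_zero, smul_image_snocAffineMap, hlast,
    integerPoints_image_snocAffineMap, Set.ncard_image_of_injective _ (snocAffineMap_injective _)]

/-- Let `n ≥ 1`, let `Vₙ` be the vertex set of the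
lecture-hall simplex `Pₙ`, and let `Q_{n+1} = conv(V_{n+1} \ {0})`.  Then
for every nonnegative integer `t`, the `t`-th dilates of `Pₙ` and of
`Q_{n+1}` contain the same number of integer points; i.e. `Pₙ` and
`Q_{n+1}` are integrally equivalent. -/
theorem lectureHall_eq_Q_lattice_count (n : ℕ) (hn : 1 ≤ n) (t : ℕ) :
    Set.ncard {x ∈ (t : ℝ) • lectureHall n | ∀ i, ∃ z : ℤ, x i = (z : ℝ)} =
    Set.ncard {x ∈ (t : ℝ) • convexHull ℝ
        ((Set.range fun k : Fin (n + 2) => lhVertex (n + 1) (k : ℕ)) \ {0}) |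
      ∀ i, ∃ z : ℤ, x i = (z : ℝ)} :=
  lectureHall_eq_Q_lattice_count_general n t
end
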